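/- Let S be a regular semigroup and θ ∈ S. In the variant semigroup S^θ with product a * b = aθb, the set Reg(S^θ) of regular elements of S^θ is closed under * whenever it is nonempty; in particular, for S = End(V) the regular elements of the variant (End(V), *) form a subsemigroup. -/

import Mathlib

/-!
If `a θ x θ a = a` and `b θ y θ b = b`, then `a θ b = (a θ x) c (y θ b)` with
`c = θ a θ b θ`, so any inner inverse `t` of `c` in `S` (`c t c = c`) is an inner inverse
of `a θ b` in `S^θ`.
Endomorphisms of a vector space form a regular semigroup: `f` factors as an injection after a
surjection, and composing a left inverse of the one with a right inverse of the other gives `g`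
with `f g f = f`.
-/

theorem exists_variant_inverse_mul {S : Type*} [Semigroup S] {θ a b : S}
    (hc : ∃ t : S, θ * a * θ * b * θ * t * (θ * a * θ * b * θ) = θ * a * θ * b * θ)
    (ha : ∃ x : S, a * θ * x * θ * a = a) (hb : ∃ y : S, b * θ * y * θ * b = b) :
    ∃ z : S, (a * θ * b) * θ * z * θ * (a * θ * b) = a * θ * b := by
  obtain ⟨x, hx⟩ := ha
  obtain ⟨y, hy⟩ := hb
  obtain ⟨t, ht⟩ := hc
  refine ⟨t, ?_⟩
  calc (a * θ * b) * θ * t * θ * (a * θ * b)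
      = (a * θ * x * θ * a) * θ * b * θ * t * θ * a * θ * (b * θ * y * θ * b) := by
        rw [hx, hy]; simp only [mul_assoc]
    _ = a * θ * x * (θ * a * θ * b * θ * t * (θ * a * θ * b * θ)) * (y * θ * b) := by
        simp only [mul_assoc]
    _ = (a * θ * x * θ * a) * θ * (b * θ * y * θ * b) := by
        rw [ht]; simp only [mul_assoc]
    _ = a * θ * b := by rw [hx, hy]

theorem Module.End.exists_mul_mul_eq_self {K V : Type*} [Field K] [AddCommGroup V] [Module K V]
    (f : Module.End K V) : ∃ g : Module.End K V, f * g * f = f := by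
  obtain ⟨r, hr⟩ := f.rangeRestrict.exists_rightInverse_of_surjective f.range_rangeRestrict
  obtain ⟨l, hl⟩ := (LinearMap.range f).subtype.exists_leftInverse_of_injective
    (LinearMap.range f).ker_subtype
  refine ⟨r ∘ₗ l, ?_⟩
  calc f * (r ∘ₗ l) * f
      = (LinearMap.range f).subtype ∘ₗ (f.rangeRestrict ∘ₗ r) ∘ₗ
          (l ∘ₗ (LinearMap.range f).subtype) ∘ₗ f.rangeRestrict := rfl
    _ = f := by rw [hr, hl]; rfl

/-- In the variant `S^θ` of a regular semigroup `S` (product `a * b = a θ b`), the set of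
regular elements of `S^θ` is closed under `*`; in particular, for `S = End(V)` the
regular elements of the variant `(End(V), *)` form a subsemigroup. -/
theorem stmt_17 (S : Type*) [Semigroup S] (hreg : ∀ s : S, ∃ t : S, s * t * s = s)
    (θ : S) (K V : Type*) [Field K] [AddCommGroup V] [Module K V]
    (Θ : V →ₗ[K] V) :
    (∀ a b : S, (∃ x : S, a * θ * x * θ * a = a) → (∃ y : S, b * θ * y * θ * b = b) →
      ∃ z : S, (a * θ * b) * θ * z * θ * (a * θ * b) = a * θ * b) ∧
    (∀ a b : V →ₗ[K] V,
      (∃ x : V →ₗ[K] V, a ∘ₗ Θ ∘ₗ x ∘ₗ Θ ∘ₗ a = a) →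
      (∃ y : V →ₗ[K] V, b ∘ₗ Θ ∘ₗ y ∘ₗ Θ ∘ₗ b = b) →
      ∃ z : V →ₗ[K] V,
        (a ∘ₗ Θ ∘ₗ b) ∘ₗ Θ ∘ₗ z ∘ₗ Θ ∘ₗ (a ∘ₗ Θ ∘ₗ b) = a ∘ₗ Θ ∘ₗ b) := by
  refine ⟨fun a b ha hb => exists_variant_inverse_mul (hreg _) ha hb, ?_⟩
  rintro a b ⟨x, hx⟩ ⟨y, hy⟩
  obtain ⟨z, hz⟩ := exists_variant_inverse_mul (Module.End.exists_mul_mul_eq_self _)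
    (a := a) (b := b) (θ := Θ) ⟨x, by simp only [mul_assoc]; exact hx⟩
    ⟨y, by simp only [mul_assoc]; exact hy⟩
  exact ⟨z, by
    simpa only [mul_assoc, Module.End.mul_eq_comp, LinearMap.comp_assoc] using hz⟩
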